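/- arXiv:2410.02092 — 6 statements merged into one kernel-verified Lean document; each statement's English description precedes it below -/
import Mathlib

section
/- Let m ≥ 2 and let A₁,…,A_m ∈ ℂ[x] be nonzero polynomials with n_j = deg A_j and n = n₁+⋯+n_m. Then the image of the generalized Sylvester map φ_{A₁,…,A_m} equals P_{n−1} ∩ (gcd(A₁,…,A_m)), the intersection of the space of polynomials of degree at most n−1 with the ideal of ℂ[x] generated by gcd(A₁,…,A_m). -/
/-!
By Bézout, every multiple `P = g c` of `g = gcd(A₁,…,A_m)` is `Σ A_j (B_j c)`. To meet the degree
bounds, fix a nonzero `A_i` and replace each coefficient `Q_j`, `j ≠ i`, by its remainder modulo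
`A_i`, moving the quotients into `Q_i`. Then `deg Q_j < n_i ≤ n - n_j`, and
`A_i Q_i = P - Σ_{j ≠ i} A_j Q_j` has degree `< n`, which forces `deg Q_i < n - n_i`.
-/

/-- The generalized Sylvester map `(Q₁,…,Q_m) ↦ Σ_j A_j Q_j`, where `Q_j` ranges over the
space of polynomials of degree `< d j` (i.e. of degree at most `d j − 1`). -/
noncomputable def sylvesterMap (m : ℕ) (A : Fin m → Polynomial ℂ) (d : Fin m → ℕ) :
    (Π j : Fin m, ↥(Polynomial.degreeLT ℂ (d j))) →ₗ[ℂ] Polynomial ℂ where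
  toFun Q := ∑ j, A j * (Q j : Polynomial ℂ)
  map_add' Q R := by
    simp only [Pi.add_apply, Submodule.coe_add, mul_add, Finset.sum_add_distrib]
  map_smul' c Q := by
    simp only [Pi.smul_apply, SetLike.val_smul, mul_smul_comm, RingHom.id_apply,
      Finset.smul_sum]

theorem Finset.add_le_sum_of_ne {ι M : Type*} [AddCommMonoid M] [PartialOrder M]
    [CanonicallyOrderedAdd M] [IsOrderedAddMonoid M] {s : Finset ι} {f : ι → M} {i j : ι}
    (hi : i ∈ s) (hj : j ∈ s) (hij : i ≠ j) : f i + f j ≤ ∑ k ∈ s, f k := by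
  classical
  rw [← Finset.sum_pair hij]
  exact Finset.sum_le_sum_of_subset (Finset.insert_subset hi (Finset.singleton_subset_iff.2 hj))

namespace Polynomial

variable {K : Type*} [Field K]

theorem mul_mem_degreeLT_of_mem_degreeLT_sub {A Q : K[X]} {n : ℕ}
    (hQ : Q ∈ degreeLT K (n - A.natDegree)) : A * Q ∈ degreeLT K n := by
  rcases eq_or_ne Q 0 with rfl | hQ0
  · simp
  rw [mem_degreeLT, ← natDegree_lt_iff_degree_lt hQ0] at hQ
  rw [mem_degreeLT]
  exact degree_le_natDegree.trans_lt <| Nat.cast_lt.2 <| natDegree_mul_le.trans_lt (by omega)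

theorem mem_degreeLT_sub_of_mul_mem_degreeLT {A Q : K[X]} {n : ℕ} (hA : A ≠ 0)
    (hAQ : A * Q ∈ degreeLT K n) : Q ∈ degreeLT K (n - A.natDegree) := by
  rcases eq_or_ne Q 0 with rfl | hQ0
  · exact Submodule.zero_mem _
  rw [mem_degreeLT, ← natDegree_lt_iff_degree_lt (mul_ne_zero hA hQ0), natDegree_mul hA hQ0]
    at hAQ
  rw [mem_degreeLT, ← natDegree_lt_iff_degree_lt hQ0]
  omega

theorem mod_mem_degreeLT {A : K[X]} (hA : A ≠ 0) (Q : K[X]) :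
    Q % A ∈ degreeLT K A.natDegree := by
  rw [mem_degreeLT, ← degree_eq_natDegree hA]
  exact EuclideanDomain.mod_lt Q hA

variable {ι : Type*} [Fintype ι]

theorem sum_mul_mem_degreeLT {A Q : ι → K[X]} {n : ℕ}
    (hQ : ∀ j, Q j ∈ degreeLT K (n - (A j).natDegree)) : ∑ j, A j * Q j ∈ degreeLT K n :=
  Submodule.sum_mem _ fun j _ => mul_mem_degreeLT_of_mem_degreeLT_sub (hQ j)

theorem sum_mul_update_div_mod [DecidableEq ι] (A Q : ι → K[X]) (i : ι) :
    ∑ j, A j * Function.update (fun j => Q j % A i) i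
        (Q i + ∑ j ∈ Finset.univ.erase i, A j * (Q j / A i)) j = ∑ j, A j * Q j := by
  rw [← Finset.add_sum_erase _ _ (Finset.mem_univ i),
    ← Finset.add_sum_erase _ _ (Finset.mem_univ i), Function.update_self, mul_add, Finset.mul_sum, add_assoc, ← Finset.sum_add_distrib]
  congr 1
  refine Finset.sum_congr rfl fun j hj => ?_
  rw [Function.update_of_ne (Finset.ne_of_mem_erase hj)]
  linear_combination A j * EuclideanDomain.div_add_mod (Q j) (A i)

theorem exists_reduced_sum_mul_eq {A Q : ι → K[X]} {n : ℕ} {i : ι} (hAi : A i ≠ 0)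
    (hpair : ∀ j, j ≠ i → (A i).natDegree + (A j).natDegree ≤ n)
    (hdeg : ∑ j, A j * Q j ∈ degreeLT K n) :
    ∃ R : ι → K[X], (∀ j, R j ∈ degreeLT K (n - (A j).natDegree)) ∧
      ∑ j, A j * R j = ∑ j, A j * Q j := by
  classical
  set R := Function.update (fun j => Q j % A i) i
    (Q i + ∑ j ∈ Finset.univ.erase i, A j * (Q j / A i))
  have hsum : ∑ j, A j * R j = ∑ j, A j * Q j := sum_mul_update_div_mod A Q i
  have hR : ∀ j, j ≠ i → R j ∈ degreeLT K (n - (A j).natDegree) := fun j hj => by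
    simp only [R, Function.update_of_ne hj]
    exact degreeLT_mono (Nat.le_sub_of_add_le (hpair j hj)) (mod_mem_degreeLT hAi (Q j))
  refine ⟨R, fun j => ?_, hsum⟩
  rcases eq_or_ne j i with rfl | hj
  · refine mem_degreeLT_sub_of_mul_mem_degreeLT hAi ?_
    have hAR : A j * R j = ∑ k, A k * R k - ∑ k ∈ Finset.univ.erase j, A k * R k := by
      rw [← Finset.add_sum_erase _ _ (Finset.mem_univ j), add_sub_cancel_right]
    rw [hAR, hsum]
    exact Submodule.sub_mem _ hdeg (Submodule.sum_mem _ fun k hk =>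
      mul_mem_degreeLT_of_mem_degreeLT_sub (hR k (Finset.ne_of_mem_erase hk)))
  · exact hR j hj

theorem exists_sum_mul_eq_iff [DecidableEq K] {A : ι → K[X]} {n : ℕ}
    (hpair : ∀ i j, i ≠ j → (A i).natDegree + (A j).natDegree ≤ n) (P : K[X]) :
    (∃ Q : ι → K[X], (∀ j, Q j ∈ degreeLT K (n - (A j).natDegree)) ∧ ∑ j, A j * Q j = P) ↔
      P ∈ degreeLT K n ∧ Finset.univ.gcd A ∣ P := by
  constructor
  · rintro ⟨Q, hQ, rfl⟩
    exact ⟨sum_mul_mem_degreeLT hQ,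
      Finset.dvd_sum fun j _ => (Finset.gcd_dvd (Finset.mem_univ j)).mul_right _⟩
  rintro ⟨hdeg, c, rfl⟩
  by_cases hA : ∀ i, A i = 0
  · refine ⟨0, fun _ => Submodule.zero_mem _, ?_⟩
    simp [Finset.gcd_eq_zero_iff.2 fun j _ => hA j]
  · obtain ⟨i, hAi⟩ := not_forall.1 hA
    obtain ⟨B, hB⟩ := Finset.univ.gcd_eq_sum_mul A
    have hBc : ∑ j, A j * (B j * c) = Finset.univ.gcd A * c := by
      simp only [hB, Finset.sum_mul, mul_assoc]
    rw [← hBc] at hdeg ⊢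
    exact exists_reduced_sum_mul_eq hAi (fun j hj => hpair i j hj.symm) hdeg

end Polynomial

theorem statement3_general (m : ℕ) (A : Fin m → Polynomial ℂ)
    (n : ℕ) (hn : n = ∑ j, (A j).natDegree) :
    (LinearMap.range (sylvesterMap m A (fun j => n - (A j).natDegree)) : Set (Polynomial ℂ))
      = (Polynomial.degreeLT ℂ n : Set (Polynomial ℂ)) ∩
        (Ideal.span {Finset.univ.gcd A} : Set (Polynomial ℂ)) := by
  have hpair : ∀ i j, i ≠ j → (A i).natDegree + (A j).natDegree ≤ n := fun i j hij =>
    hn ▸ Finset.add_le_sum_of_ne (f := fun k => (A k).natDegree) (Finset.mem_univ i)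
      (Finset.mem_univ j) hij
  ext P
  simp only [Set.mem_inter_iff, SetLike.mem_coe, Ideal.mem_span_singleton,
    ← Polynomial.exists_sum_mul_eq_iff hpair, LinearMap.mem_range]
  constructor
  · rintro ⟨Q, rfl⟩
    exact ⟨fun j => Q j, fun j => (Q j).2, rfl⟩
  · rintro ⟨Q, hQ, rfl⟩
    exact ⟨fun j => ⟨Q j, hQ j⟩, rfl⟩

theorem statement3 (m : ℕ) (hm : 2 ≤ m) (A : Fin m → Polynomial ℂ)
    (hA : ∀ j, A j ≠ 0) (n : ℕ) (hn : n = ∑ j, (A j).natDegree) :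
    (LinearMap.range (sylvesterMap m A (fun j => n - (A j).natDegree)) : Set (Polynomial ℂ))
      = (Polynomial.degreeLT ℂ n : Set (Polynomial ℂ)) ∩
        (Ideal.span {Finset.univ.gcd A} : Set (Polynomial ℂ)) :=
  statement3_general m A n hn
end

section
/- Let m ≥ 2 and let A₁,…,A_m ∈ ℂ[x] be nonzero polynomials with n_j = deg A_j and n = n₁+⋯+n_m. Then the rank of the generalized Sylvester map φ_{A₁,…,A_m} (the dimension of its image) equals n − deg gcd(A₁,…,A_m). -/
theorem sylvesterMap_apply (m : ℕ) (A : Fin m → Polynomial ℂ) (d : Fin m → ℕ)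
    (Q : Π j : Fin m, ↥(Polynomial.degreeLT ℂ (d j))) :
    sylvesterMap m A d Q = ∑ j, A j * (Q j : Polynomial ℂ) :=
  rfl

theorem Finset.gcd_mem_span_image {R ι : Type*} [CommRing R] [IsDomain R] [IsBezout R]
    [NormalizedGCDMonoid R] (s : Finset ι) (f : ι → R) :
    s.gcd f ∈ Ideal.span (f '' s) := by
  classical
  induction s using Finset.induction with
  | empty => simp
  | @insert a s _ ih =>
    rw [Finset.gcd_insert, Finset.coe_insert, Set.image_insert_eq, Ideal.span_insert]
    have hpair : Ideal.span {f a, s.gcd f} ≤ Ideal.span {f a} ⊔ Ideal.span (f '' s) := by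
      rw [Ideal.span_insert]
      exact sup_le_sup_left ((Ideal.span_singleton_le_iff_mem _).2 ih) _
    exact hpair (span_gcd (f a) (s.gcd f) ▸ Ideal.mem_span_singleton_self _)

namespace Polynomial

theorem mul_mem_degreeLT_of_mem_degreeLT_sub_s4 {R : Type*} [Semiring R] {p q : R[X]} {n : ℕ}
    (hq : q ∈ degreeLT R (n - p.natDegree)) : p * q ∈ degreeLT R n := by
  rw [mem_degreeLT] at hq ⊢
  rcases eq_or_ne q 0 with rfl | hq0
  · simp
  · rw [degree_eq_natDegree hq0, Nat.cast_lt] at hq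
    calc (p * q).degree ≤ p.degree + q.degree := degree_mul_le p q
      _ ≤ (p.natDegree + q.natDegree : ℕ) := by
        rw [Nat.cast_add]; exact add_le_add degree_le_natDegree degree_le_natDegree
      _ < n := by exact_mod_cast (by omega)

theorem mul_mem_degreeLT_iff {R : Type*} [Semiring R] [NoZeroDivisors R] {p q : R[X]} {n : ℕ}
    (hp : p ≠ 0) : p * q ∈ degreeLT R n ↔ q ∈ degreeLT R (n - p.natDegree) := by
  refine ⟨fun hpq => ?_, mul_mem_degreeLT_of_mem_degreeLT_sub_s4⟩
  rcases eq_or_ne q 0 with rfl | hq0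
  · exact zero_mem _
  · rw [mem_degreeLT, degree_eq_natDegree (mul_ne_zero hp hq0), natDegree_mul hp hq0,
      Nat.cast_lt] at hpq
    rw [mem_degreeLT, degree_eq_natDegree hq0, Nat.cast_lt]
    omega

theorem exists_sum_mul_eq_of_mem_span_range {K ι : Type*} [Field K] [Fintype ι]
    {A : ι → K[X]} (hA : ∀ j, A j ≠ 0) {p : K[X]} (hpA : p ∈ Ideal.span (Set.range A))
    (hp : p ∈ degreeLT K (∑ j, (A j).natDegree)) :
    ∃ r : ι → K[X], (∀ j, r j ∈ degreeLT K (∑ i, (A i).natDegree - (A j).natDegree)) ∧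
      ∑ j, A j * r j = p := by
  classical
  set N := ∑ i, (A i).natDegree
  obtain ⟨c, rfl⟩ := (Submodule.mem_span_range_iff_exists_fun _).mp hpA
  set M : ι → K[X] := fun j => ∏ i ∈ Finset.univ.erase j, A i
  have hM0 : ∀ j, M j ≠ 0 := fun j => Finset.prod_ne_zero_iff.mpr fun i _ => hA i
  have hAM : ∀ j, A j * M j = ∏ i, A i := fun j => Finset.mul_prod_erase _ A (Finset.mem_univ j)
  have hP : (∏ i, A i).degree = N := by
    rw [degree_eq_natDegree (Finset.prod_ne_zero_iff.mpr fun i _ => hA i),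
      natDegree_prod _ _ fun i _ => hA i]
  have hMdeg : ∀ j, (M j).natDegree = N - (A j).natDegree := fun j => by
    have := Finset.sum_erase_add _ (fun i => (A i).natDegree) (Finset.mem_univ j)
    simp only [M, natDegree_prod _ _ fun i _ => hA i]
    omega
  have hr : ∀ j, c j % M j ∈ degreeLT K (N - (A j).natDegree) := fun j => by
    rw [mem_degreeLT, ← hMdeg, ← degree_eq_natDegree (hM0 j)]
    exact EuclideanDomain.mod_lt _ (hM0 j)
  refine ⟨fun j => c j % M j, hr, (sub_eq_zero.mp ?_).symm⟩
  have hdiff : ∑ j, c j • A j - ∑ j, A j * (c j % M j) = (∑ j, c j / M j) * ∏ i, A i := by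
    rw [Finset.sum_mul, ← Finset.sum_sub_distrib]
    refine Finset.sum_congr rfl fun j _ => ?_
    rw [← hAM j, smul_eq_mul]
    linear_combination -A j * EuclideanDomain.div_add_mod (c j) (M j)
  have hlt : ∑ j, c j • A j - ∑ j, A j * (c j % M j) ∈ degreeLT K N :=
    sub_mem hp (sum_mem fun j _ => mul_mem_degreeLT_of_mem_degreeLT_sub_s4 (hr j))
  rw [hdiff] at hlt ⊢
  exact eq_zero_of_dvd_of_degree_lt (dvd_mul_left _ _) (hP ▸ mem_degreeLT.mp hlt)

theorem map_mulLeft_degreeLT {R : Type*} [CommSemiring R] [NoZeroDivisors R] {g : R[X]}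
    (hg : g ≠ 0) (n : ℕ) :
    (degreeLT R (n - g.natDegree)).map (LinearMap.mulLeft R g) =
      degreeLT R n ⊓ (Ideal.span {g}).restrictScalars R := by
  ext p
  simp only [Submodule.mem_map, LinearMap.mulLeft_apply, Submodule.mem_inf,
    Submodule.restrictScalars_mem, Ideal.mem_span_singleton]
  constructor
  · rintro ⟨h, hh, rfl⟩
    exact ⟨(mul_mem_degreeLT_iff hg).2 hh, dvd_mul_right g h⟩
  · rintro ⟨hp, h, rfl⟩
    exact ⟨h, (mul_mem_degreeLT_iff hg).1 hp, rfl⟩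

theorem finrank_degreeLT_inf_span_singleton {K : Type*} [Field K] {g : K[X]} (hg : g ≠ 0)
    (n : ℕ) :
    Module.finrank K ↥(degreeLT K n ⊓ (Ideal.span {g}).restrictScalars K) = n - g.natDegree := by
  rw [← map_mulLeft_degreeLT hg,
    ← (Submodule.equivMapOfInjective _ (mul_right_injective₀ hg) _).finrank_eq,
    (degreeLTEquiv K _).finrank_eq, Module.finrank_fin_fun]

end Polynomial

theorem range_sylvesterMap {m : ℕ} {A : Fin m → Polynomial ℂ} (hA : ∀ j, A j ≠ 0) {n : ℕ}
    (hn : n = ∑ j, (A j).natDegree) :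
    LinearMap.range (sylvesterMap m A fun j => n - (A j).natDegree) =
      Polynomial.degreeLT ℂ n ⊓ (Ideal.span {Finset.univ.gcd A}).restrictScalars ℂ := by
  ext p
  simp only [LinearMap.mem_range, sylvesterMap_apply, Submodule.mem_inf,
    Submodule.restrictScalars_mem, Ideal.mem_span_singleton]
  constructor
  · rintro ⟨Q, rfl⟩
    exact ⟨sum_mem fun j _ => Polynomial.mul_mem_degreeLT_of_mem_degreeLT_sub_s4 (Q j).2,
      Finset.dvd_sum fun j _ => (Finset.gcd_dvd (Finset.mem_univ j)).mul_right _⟩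
  · rintro ⟨hp, h, rfl⟩
    have hgA : Finset.univ.gcd A ∈ Ideal.span (Set.range A) := by
      simpa using Finset.univ.gcd_mem_span_image A
    subst hn
    obtain ⟨r, hr, hsum⟩ :=
      Polynomial.exists_sum_mul_eq_of_mem_span_range hA (Ideal.mul_mem_right h _ hgA) hp
    exact ⟨fun j => ⟨r j, hr j⟩, hsum⟩

theorem statement4 (m : ℕ) (hm : 2 ≤ m) (A : Fin m → Polynomial ℂ)
    (hA : ∀ j, A j ≠ 0) (n : ℕ) (hn : n = ∑ j, (A j).natDegree) :
    Module.finrank ℂ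
        ↥(LinearMap.range (sylvesterMap m A (fun j => n - (A j).natDegree)))
      = n - (Finset.univ.gcd A).natDegree := by
  have hg : Finset.univ.gcd A ≠ 0 := fun h =>
    hA ⟨0, by omega⟩ (Finset.gcd_eq_zero_iff.mp h _ (Finset.mem_univ _))
  rw [range_sylvesterMap hA hn, Polynomial.finrank_degreeLT_inf_span_singleton hg]
end

section
/- Let ℋ be a complex Hilbert space (more generally, a Banach space) and let π₁, π₂ be bounded linear operators on ℋ that are projections (π_j² = π_j) with ‖π₁ − π₂‖ < 1. Then the ranges of π₁ and π₂ are isomorphic as vector spaces; in particular π₁ and π₂ have the same (potentially infinite) rank. -/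
/-!
Following Kato, the operator `U = π₂ π₁ + (1 - π₂)(1 - π₁)` satisfies `U π₁ = π₂ U`, and
`U V = V U = 1 - (π₁ - π₂)²` for the operator `V` obtained by exchanging `π₁` and `π₂`.
When `‖π₁ - π₂‖ < 1` the right-hand side is invertible by the Neumann series, so `U` is an
invertible operator conjugating `π₁` to `π₂`; it therefore maps the range of `π₁` onto that
of `π₂`.
-/

def idempotentTransport {R : Type*} [Ring R] (p q : R) : R :=
  q * p + (1 - q) * (1 - p)

section Ring

variable {R : Type*} [Ring R] {p q : R}

theorem idempotentTransport_mul_idempotentTransport (hp : IsIdempotentElem p)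
    (hq : IsIdempotentElem q) :
    idempotentTransport p q * idempotentTransport q p = 1 - (p - q) ^ 2 := by
  unfold idempotentTransport
  noncomm_ring
  simp only [← mul_assoc, hp.eq, hq.eq]
  abel

theorem idempotentTransport_mul_left (hp : IsIdempotentElem p) (hq : IsIdempotentElem q) :
    idempotentTransport p q * p = q * idempotentTransport p q := by
  unfold idempotentTransport
  noncomm_ring
  simp only [← mul_assoc, hp.eq, hq.eq]
  abel

end Ring

theorem isUnit_idempotentTransport {R : Type*} [NormedRing R] [CompleteSpace R] {p q : R}
    (hp : IsIdempotentElem p) (hq : IsIdempotentElem q) (hpq : ‖p - q‖ < 1) :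
    IsUnit (idempotentTransport p q) := by
  have hsq : ‖(p - q) ^ 2‖ < 1 :=
    (norm_pow_le' _ two_pos).trans_lt (pow_lt_one₀ (norm_nonneg _) hpq two_ne_zero)
  have hUV := idempotentTransport_mul_idempotentTransport hp hq
  have hVU : idempotentTransport q p * idempotentTransport p q = 1 - (p - q) ^ 2 := by
    rw [idempotentTransport_mul_idempotentTransport hq hp, ← neg_sub p q, neg_sq]
  have hcomm : Commute (idempotentTransport p q) (idempotentTransport q p) := hUV.trans hVU.symm
  exact (hcomm.isUnit_mul_iff.mp (hUV ▸ isUnit_one_sub_of_norm_lt_one hsq)).1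

def LinearEquiv.rangeEquivOfConj {R M M₂ : Type*} [Semiring R] [AddCommMonoid M]
    [AddCommMonoid M₂] [Module R M] [Module R M₂] (e : M ≃ₗ[R] M₂) {p : M →ₗ[R] M}
    {q : M₂ →ₗ[R] M₂} (h : (e : M →ₗ[R] M₂) ∘ₗ p = q ∘ₗ e) :
    LinearMap.range p ≃ₗ[R] LinearMap.range q :=
  (e.submoduleMap _).trans <| LinearEquiv.ofEq _ _ <| by
    rw [← LinearMap.range_comp, h, LinearMap.range_comp_of_range_eq_top _ e.range]

theorem statement10 {H : Type} [NormedAddCommGroup H] [NormedSpace ℂ H] [CompleteSpace H]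
    (π₁ π₂ : H →L[ℂ] H)
    (h₁ : π₁.comp π₁ = π₁) (h₂ : π₂.comp π₂ = π₂)
    (hlt : ‖π₁ - π₂‖ < 1) :
    Nonempty (↥(LinearMap.range (π₁ : H →ₗ[ℂ] H)) ≃ₗ[ℂ] ↥(LinearMap.range (π₂ : H →ₗ[ℂ] H))) ∧
    Module.rank ℂ ↥(LinearMap.range (π₁ : H →ₗ[ℂ] H)) = Module.rank ℂ ↥(LinearMap.range (π₂ : H →ₗ[ℂ] H)) := by
  have hU := isUnit_idempotentTransport h₁ h₂ hlt
  let e : H ≃L[ℂ] H := ContinuousLinearEquiv.unitsEquiv ℂ H hU.unit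
  have hconj : (e : H →ₗ[ℂ] H) ∘ₗ (π₁ : H →ₗ[ℂ] H) = (π₂ : H →ₗ[ℂ] H) ∘ₗ (e : H →ₗ[ℂ] H) :=
    congrArg ContinuousLinearMap.toLinearMap (idempotentTransport_mul_left h₁ h₂)
  let iso := e.toLinearEquiv.rangeEquivOfConj hconj
  exact ⟨⟨iso⟩, iso.rank_eq⟩
end

section
/- Let α ∈ ℂ and κ = (κ₁, κ₂, κ₃) ∈ ℝ³, and let M(κ) be the 3×3 complex matrix M(κ) = −2i · [[0, ακ₃, −ᾱκ₂], [−ᾱκ₃, 0, ακ₁], [ακ₂, −ᾱκ₁, 0]]. Then M(κ) is Hermitian and its characteristic polynomial is det(μ·I − M(κ)) = μ³ − 4|α|²‖κ‖²μ + 16·Im(α³)·κ₁κ₂κ₃, where ‖κ‖² = κ₁² + κ₂² + κ₃². -/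
/-!
Write `M(κ) = c • A` with `c = −2i` and `A = crossMatrix α κ₁ κ₂ κ₃` the bracketed matrix. Since
`c` is purely imaginary and `A` is skew-Hermitian, `M(κ)` is Hermitian. Since `M(κ)` has zero
diagonal, its characteristic polynomial is `μ³ − (M₀₁M₁₀ + M₀₂M₂₀ + M₁₂M₂₁) μ − (M₀₁M₁₂M₂₀ + M₀₂M₂₁M₁₀)`.
The three pair products are `4|α|²κ₃², 4|α|²κ₂², 4|α|²κ₁²`, and the two triple products are
`8i α³ κ₁κ₂κ₃` and its complex conjugate, which add up to `8i · 2i Im(α³) κ₁κ₂κ₃`.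
-/

open ComplexConjugate Matrix

namespace Matrix

theorem IsHermitian.smul_of_star_eq_neg {R α n : Type*} [Ring R] [Star R] [AddCommGroup α]
    [StarAddMonoid α] [Module R α] [StarModule R α]
    {c : R} (hc : star c = -c) {A : Matrix n n α} (hA : Aᴴ = -A) : (c • A).IsHermitian := by
  rw [IsHermitian, conjTranspose_smul, hc, hA, neg_smul_neg]

theorem det_smul_one_sub_of_diag_eq_zero {R : Type*} [CommRing R] (M : Matrix (Fin 3) (Fin 3) R)
    (hM : ∀ i, M i i = 0) (μ : R) :
    (μ • (1 : Matrix (Fin 3) (Fin 3) R) - M).det =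
      μ ^ 3 - (M 0 1 * M 1 0 + M 0 2 * M 2 0 + M 1 2 * M 2 1) * μ
        - (M 0 1 * M 1 2 * M 2 0 + M 0 2 * M 2 1 * M 1 0) := by
  simp only [det_fin_three, sub_apply, smul_apply, hM, one_apply_eq, one_apply_ne, ne_eq,
    Fin.reduceEq, not_false_eq_true, smul_eq_mul]
  ring

end Matrix

def crossMatrix (α : ℂ) (κ₁ κ₂ κ₃ : ℝ) : Matrix (Fin 3) (Fin 3) ℂ :=
  !![0, α * (κ₃ : ℂ), -(conj α) * (κ₂ : ℂ);
     -(conj α) * (κ₃ : ℂ), 0, α * (κ₁ : ℂ);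
     α * (κ₂ : ℂ), -(conj α) * (κ₁ : ℂ), 0]

namespace crossMatrix

variable (α : ℂ) (κ₁ κ₂ κ₃ : ℝ)

theorem conjTranspose : (crossMatrix α κ₁ κ₂ κ₃)ᴴ = -crossMatrix α κ₁ κ₂ κ₃ := by
  ext i j
  fin_cases i <;> fin_cases j <;> simp [crossMatrix]

theorem diag_eq_zero (i : Fin 3) : crossMatrix α κ₁ κ₂ κ₃ i i = 0 := by
  fin_cases i <;> rfl

theorem smul_pair_products :
    let M := (-(2 * Complex.I)) • crossMatrix α κ₁ κ₂ κ₃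
    M 0 1 * M 1 0 + M 0 2 * M 2 0 + M 1 2 * M 2 1 =
      4 * ((‖α‖ : ℝ) : ℂ) ^ 2 * ((κ₁ ^ 2 + κ₂ ^ 2 + κ₃ ^ 2 : ℝ) : ℂ) := by
  have h : α * conj α = ((‖α‖ : ℝ) : ℂ) ^ 2 := by
    rw [Complex.mul_conj, Complex.normSq_eq_norm_sq, Complex.ofReal_pow]
  simp only [crossMatrix, Matrix.smul_apply, of_apply, cons_val', cons_val_zero, cons_val_one,
    cons_val, cons_val_fin_one, smul_eq_mul, Complex.ofReal_add, Complex.ofReal_pow]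
  linear_combination (-4 * Complex.I ^ 2 * (κ₁ ^ 2 + κ₂ ^ 2 + κ₃ ^ 2 : ℂ)) * h
    - 4 * ((‖α‖ : ℝ) : ℂ) ^ 2 * (κ₁ ^ 2 + κ₂ ^ 2 + κ₃ ^ 2 : ℂ) * Complex.I_sq

theorem smul_triple_products :
    let M := (-(2 * Complex.I)) • crossMatrix α κ₁ κ₂ κ₃
    M 0 1 * M 1 2 * M 2 0 + M 0 2 * M 2 1 * M 1 0 =
      -(16 * (((α ^ 3).im : ℝ) : ℂ) * κ₁ * κ₂ * κ₃) := by
  have h := Complex.sub_conj (α ^ 3)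
  simp only [map_pow, Complex.ofReal_mul, Complex.ofReal_ofNat] at h
  simp only [crossMatrix, Matrix.smul_apply, of_apply, cons_val', cons_val_zero, cons_val_one,
    cons_val, cons_val_fin_one, smul_eq_mul]
  linear_combination (-8 * Complex.I ^ 3 * κ₁ * κ₂ * κ₃) * h
    - 16 * (((α ^ 3).im : ℝ) : ℂ) * κ₁ * κ₂ * κ₃ * (Complex.I ^ 2 - 1) * Complex.I_sq

end crossMatrix

theorem statement16 (α : ℂ) (κ₁ κ₂ κ₃ : ℝ)
    (M : Matrix (Fin 3) (Fin 3) ℂ)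
    (hM : M = (-(2 * Complex.I)) •
      !![0, α * (κ₃ : ℂ), -(starRingEnd ℂ α) * (κ₂ : ℂ);
         -(starRingEnd ℂ α) * (κ₃ : ℂ), 0, α * (κ₁ : ℂ);
         α * (κ₂ : ℂ), -(starRingEnd ℂ α) * (κ₁ : ℂ), 0]) :
    M.IsHermitian ∧
    ∀ μ : ℂ, (μ • (1 : Matrix (Fin 3) (Fin 3) ℂ) - M).det =
      μ ^ 3 - 4 * ((‖α‖ : ℝ) : ℂ) ^ 2 * ((κ₁ ^ 2 + κ₂ ^ 2 + κ₃ ^ 2 : ℝ) : ℂ) * μ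
        + 16 * (((α ^ 3).im : ℝ) : ℂ) * (κ₁ : ℂ) * (κ₂ : ℂ) * (κ₃ : ℂ) := by
  change M = (-(2 * Complex.I)) • crossMatrix α κ₁ κ₂ κ₃ at hM
  subst hM
  refine ⟨IsHermitian.smul_of_star_eq_neg (by simp) (crossMatrix.conjTranspose ..), fun μ => ?_⟩
  rw [det_smul_one_sub_of_diag_eq_zero _ fun i => by
    rw [Matrix.smul_apply, crossMatrix.diag_eq_zero, smul_zero],
    crossMatrix.smul_pair_products, crossMatrix.smul_triple_products]
  ring
end

section
/- Let Λ ⊂ ℝⁿ be a lattice with dual lattice Λ* and Brillouin zone B. Let K ∈ B and suppose K₁,…,K_m are m distinct nonzero elements of Λ* satisfying K·K_j = ½‖K_j‖² for j = 1,…,m (that is, K lies on the m bisecting hyperplanes {x : x·K_j = ½‖K_j‖²}). Then for each j = 1,…,m: (a) ‖K − K_j‖ = ‖K‖; (b) K − K_j ∈ B; and (c) K − K_j lies on m bisecting hyperplanes of dual lattice vectors, namely (K−K_j)·(−K_j) = ½‖−K_j‖² and (K−K_j)·(K_ℓ−K_j) = ½‖K_ℓ−K_j‖² for every ℓ ∈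 {1,…,m} with ℓ ≠ j. In particular, the set {k ∈ K + Λ* : ‖k‖ = ‖K‖} has at least m+1 elements. -/
/-!
If `⟪K, v⟫ = ‖v‖² / 2` then `‖K - v‖² = ‖K‖² - 2⟪K, v⟫ + ‖v‖² = ‖K‖²`, so the translate `K - v`
by a dual lattice vector has the same norm as `K`. Since the dual lattice is a group, the
distances from `K - v` to lattice points are distances from `K` to lattice points, so `K - v`
stays in the Brillouin zone; the bisector identities for `K - v` are bilinear expansions.
The points `K` and `K - K_j` are pairwise distinct, giving `m + 1` points of `K + Λ*` on the
sphere of radius `‖K‖`.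
-/

open scoped RealInnerProductSpace

/-- The Brillouin zone of the lattice whose dual lattice is spanned (over `ℤ`) by `kd`:
the set of points closer to the origin than to any other point of the dual lattice. -/
def brillouinZone {n : ℕ} (kd : Fin n → EuclideanSpace ℝ (Fin n)) :
    Set (EuclideanSpace ℝ (Fin n)) :=
  {x | ∀ q ∈ (Submodule.span ℤ (Set.range kd) :
      Submodule ℤ (EuclideanSpace ℝ (Fin n))), ‖x‖ ≤ ‖x - q‖}

section Bisector

variable {E : Type*} [NormedAddCommGroup E] [InnerProductSpace ℝ E] {x v w : E}

theorem norm_sub_eq_norm_of_inner_eq_half_norm_sq (h : ⟪x, v⟫ = (1 / 2) * ‖v‖ ^ 2) :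
    ‖x - v‖ = ‖x‖ := by
  have hsq : ‖x - v‖ ^ 2 = ‖x‖ ^ 2 := by
    rw [norm_sub_sq_real, h]
    ring
  exact (pow_left_inj₀ (norm_nonneg _) (norm_nonneg _) two_ne_zero).mp hsq

theorem inner_sub_neg_eq_half_norm_sq (h : ⟪x, v⟫ = (1 / 2) * ‖v‖ ^ 2) :
    ⟪x - v, -v⟫ = (1 / 2) * ‖-v‖ ^ 2 := by
  rw [inner_neg_right, inner_sub_left, h, real_inner_self_eq_norm_sq, norm_neg]
  ring

theorem inner_sub_sub_eq_half_norm_sq (hv : ⟪x, v⟫ = (1 / 2) * ‖v‖ ^ 2)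
    (hw : ⟪x, w⟫ = (1 / 2) * ‖w‖ ^ 2) :
    ⟪x - v, w - v⟫ = (1 / 2) * ‖w - v‖ ^ 2 := by
  rw [inner_sub_left, inner_sub_right, inner_sub_right, hv, hw, real_inner_self_eq_norm_sq,
    norm_sub_sq_real, real_inner_comm v w]
  ring

end Bisector

theorem sub_mem_brillouinZone {n : ℕ} {kd : Fin n → EuclideanSpace ℝ (Fin n)}
    {x v : EuclideanSpace ℝ (Fin n)} (hx : x ∈ brillouinZone kd)
    (hv : v ∈ (Submodule.span ℤ (Set.range kd) : Submodule ℤ (EuclideanSpace ℝ (Fin n))))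
    (hnorm : ‖x - v‖ = ‖x‖) :
    x - v ∈ brillouinZone kd := by
  intro q hq
  rw [hnorm, sub_sub]
  exact hx (v + q) (Submodule.add_mem _ hv hq)

theorem injective_cons_sub {α : Type*} [AddGroup α] {m : ℕ} (x : α) {v : Fin m → α}
    (hne : ∀ j, v j ≠ 0) (hinj : Function.Injective v) :
    Function.Injective (Fin.cons x fun j => x - v j : Fin (m + 1) → α) := by
  refine Fin.cons_injective_iff.mpr ⟨?_, (sub_right_injective (b := x)).comp hinj⟩
  rintro ⟨j, hj⟩
  exact hne j (sub_eq_self.mp hj)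

theorem statement17_general (n m : ℕ)
    (kd : Fin n → EuclideanSpace ℝ (Fin n))
    (K : EuclideanSpace ℝ (Fin n)) (hK : K ∈ brillouinZone kd)
    -- `K₁, …, K_m` are distinct nonzero dual lattice vectors …
    (Kv : Fin m → EuclideanSpace ℝ (Fin n))
    (hKvmem : ∀ j, Kv j ∈ (Submodule.span ℤ (Set.range kd) :
      Submodule ℤ (EuclideanSpace ℝ (Fin n))))
    (hKvne : ∀ j, Kv j ≠ 0) (hKvinj : Function.Injective Kv)
    -- … whose bisecting hyperplanes contain `K`
    (hbis : ∀ j, ⟪K, Kv j⟫ = (1 / 2) * ‖Kv j‖ ^ 2) :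
    -- (a)
    (∀ j, ‖K - Kv j‖ = ‖K‖) ∧
    -- (b)
    (∀ j, K - Kv j ∈ brillouinZone kd) ∧
    -- (c)
    (∀ j, ⟪K - Kv j, -Kv j⟫ = (1 / 2) * ‖-Kv j‖ ^ 2 ∧
      ∀ ℓ, ℓ ≠ j → ⟪K - Kv j, Kv ℓ - Kv j⟫ = (1 / 2) * ‖Kv ℓ - Kv j‖ ^ 2) ∧
    -- `{k ∈ K + Λ* : ‖k‖ = ‖K‖}` has at least `m + 1` elements
    (((m + 1 : ℕ) : Cardinal) ≤ Cardinal.mk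
      {k : EuclideanSpace ℝ (Fin n) |
        k - K ∈ (Submodule.span ℤ (Set.range kd) :
          Submodule ℤ (EuclideanSpace ℝ (Fin n))) ∧ ‖k‖ = ‖K‖}) := by
  have hnorm j := norm_sub_eq_norm_of_inner_eq_half_norm_sq (hbis j)
  refine ⟨hnorm, fun j => sub_mem_brillouinZone hK (hKvmem j) (hnorm j),
    fun j => ⟨inner_sub_neg_eq_half_norm_sq (hbis j),
      fun ℓ _ => inner_sub_sub_eq_half_norm_sq (hbis j) (hbis ℓ)⟩, ?_⟩
  have hmem : ∀ i, (Fin.cons K fun j => K - Kv j : Fin (m + 1) → _) i ∈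
      {k : EuclideanSpace ℝ (Fin n) | k - K ∈ (Submodule.span ℤ (Set.range kd) :
          Submodule ℤ (EuclideanSpace ℝ (Fin n))) ∧ ‖k‖ = ‖K‖} := by
    refine Fin.cases ⟨by simp, rfl⟩ fun j => ⟨?_, hnorm j⟩
    simpa using Submodule.neg_mem _ (hKvmem j)
  simpa using Cardinal.mk_le_of_injective
    ((Set.injective_codRestrict hmem).mpr (injective_cons_sub K hKvne hKvinj))

theorem statement17 (n m : ℕ)
    (b : Module.Basis (Fin n) ℝ (EuclideanSpace ℝ (Fin n)))
    (kd : Fin n → EuclideanSpace ℝ (Fin n))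
    -- `kd` is the dual basis: `⟪kd i, b j⟫ = 2π δ_{ij}`
    (hdual : ∀ i j, ⟪kd i, b j⟫ = if i = j then 2 * Real.pi else 0)
    (K : EuclideanSpace ℝ (Fin n)) (hK : K ∈ brillouinZone kd)
    -- `K₁, …, K_m` are distinct nonzero dual lattice vectors …
    (Kv : Fin m → EuclideanSpace ℝ (Fin n))
    (hKvmem : ∀ j, Kv j ∈ (Submodule.span ℤ (Set.range kd) :
      Submodule ℤ (EuclideanSpace ℝ (Fin n))))
    (hKvne : ∀ j, Kv j ≠ 0) (hKvinj : Function.Injective Kv)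
    -- … whose bisecting hyperplanes contain `K`
    (hbis : ∀ j, ⟪K, Kv j⟫ = (1 / 2) * ‖Kv j‖ ^ 2) :
    -- (a)
    (∀ j, ‖K - Kv j‖ = ‖K‖) ∧
    -- (b)
    (∀ j, K - Kv j ∈ brillouinZone kd) ∧
    -- (c)
    (∀ j, ⟪K - Kv j, -Kv j⟫ = (1 / 2) * ‖-Kv j‖ ^ 2 ∧
      ∀ ℓ, ℓ ≠ j → ⟪K - Kv j, Kv ℓ - Kv j⟫ = (1 / 2) * ‖Kv ℓ - Kv j‖ ^ 2) ∧
    -- `{k ∈ K + Λ* : ‖k‖ = ‖K‖}` has at least `m + 1` elements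
    (((m + 1 : ℕ) : Cardinal) ≤ Cardinal.mk
      {k : EuclideanSpace ℝ (Fin n) |
        k - K ∈ (Submodule.span ℤ (Set.range kd) :
          Submodule ℤ (EuclideanSpace ℝ (Fin n))) ∧ ‖k‖ = ‖K‖}) :=
  statement17_general n m kd K hK Kv hKvmem hKvne hKvinj hbis
end

section
/- Let Λ ⊂ ℝⁿ be a lattice with dual lattice Λ* and Brillouin zone B, and let V(B) denote the set of vertices of B, i.e. the extreme points of the convex set B. If K ∈ V(B), then {k ∈ K + Λ* : ‖k‖ = ‖K‖} = V(B) ∩ (K + Λ*); that is, a point of K + Λ* has the same norm as K if and only if it is a vertex of the Brillouin zone. -/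
open scoped RealInnerProductSpace

section ExtremePoints

variable {𝕜 E : Type*} [AddCommGroup E]

theorem isExtreme_setOf_eq_of_forall_le [CommRing 𝕜] [LinearOrder 𝕜] [IsStrictOrderedRing 𝕜]
    [Module 𝕜 E] {A : Set E} (f : E →ₗ[𝕜] 𝕜) {c : 𝕜}
    (hf : ∀ x ∈ A, f x ≤ c) : IsExtreme 𝕜 A {x ∈ A | f x = c} := by
  refine ⟨fun x hx => hx.1, ?_⟩
  rintro x₁ hx₁ x₂ hx₂ x ⟨-, hx⟩ ⟨a, b, ha, hb, hab, rfl⟩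
  have h₁ := hf x₁ hx₁
  have h₂ := hf x₂ hx₂
  rw [map_add, map_smul, map_smul, smul_eq_mul, smul_eq_mul] at hx
  have key : a * c ≤ a * f x₁ := by
    linear_combination c * hab - hx + mul_le_mul_of_nonneg_left h₂ hb.le
  exact ⟨hx₁, le_antisymm h₁ (le_of_mul_le_mul_left key ha)⟩

theorem mem_extremePoints_of_add_mem_extremePoints [Ring 𝕜] [PartialOrder 𝕜] [IsOrderedRing 𝕜]
    [Module 𝕜 E] {A B : Set E} {x v : E}
    (hAB : IsExtreme 𝕜 A B) (hBA : ∀ y ∈ B, v + y ∈ A) (hx : x ∈ B)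
    (hvx : v + x ∈ A.extremePoints 𝕜) : x ∈ A.extremePoints 𝕜 := by
  refine hAB.extremePoints_subset_extremePoints (mem_extremePoints_iff_left.2 ⟨hx, ?_⟩)
  intro x₁ hx₁ x₂ hx₂ hseg
  have hseg' : v + x ∈ openSegment 𝕜 (v + x₁) (v + x₂) :=
    (mem_openSegment_translate 𝕜 v).2 hseg
  exact add_left_cancel (mem_extremePoints_iff_left.1 hvx |>.2 _ (hBA x₁ hx₁) _ (hBA x₂ hx₂) hseg')

end ExtremePoints

section VoronoiCell

variable {E : Type*} [NormedAddCommGroup E]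

def voronoiCell (L : Submodule ℤ E) : Set E :=
  {x | ∀ q ∈ L, ‖x‖ ≤ ‖x - q‖}

variable {L : Submodule ℤ E} {x y q : E}

theorem sub_mem_voronoiCell (hx : x ∈ voronoiCell L) (hq : q ∈ L) (h : ‖x - q‖ = ‖x‖) :
    x - q ∈ voronoiCell L := by
  intro q' hq'
  rw [h, sub_sub]
  exact hx _ (L.add_mem hq hq')

theorem norm_eq_of_mem_voronoiCell_of_sub_mem (hx : x ∈ voronoiCell L)
    (hy : y ∈ voronoiCell L) (hxy : x - y ∈ L) : ‖x‖ = ‖y‖ := by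
  refine le_antisymm ?_ ?_
  · simpa using hx _ hxy
  · simpa using hy _ (L.neg_mem hxy)

variable [InnerProductSpace ℝ E]

theorem norm_le_norm_sub_iff (x q : E) : ‖x‖ ≤ ‖x - q‖ ↔ 2 * ⟪x, q⟫ ≤ ‖q‖ ^ 2 := by
  rw [← pow_le_pow_iff_left₀ (norm_nonneg x) (norm_nonneg _) two_ne_zero, norm_sub_sq_real]
  constructor <;> intro h <;> linarith

theorem norm_sub_eq_norm_iff (x q : E) : ‖x - q‖ = ‖x‖ ↔ 2 * ⟪x, q⟫ = ‖q‖ ^ 2 := by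
  rw [← pow_left_inj₀ (norm_nonneg _) (norm_nonneg x) two_ne_zero, norm_sub_sq_real]
  constructor <;> intro h <;> linarith

theorem isExtreme_voronoiCell_bisector (hq : q ∈ L) :
    IsExtreme ℝ (voronoiCell L) {x ∈ voronoiCell L | ‖x - q‖ = ‖x‖} := by
  have hle : ∀ x ∈ voronoiCell L, innerₗ E q x ≤ ‖q‖ ^ 2 / 2 := fun x hx => by
    have := (norm_le_norm_sub_iff x q).1 (hx q hq)
    rw [innerₗ_apply_apply, real_inner_comm]
    linarith
  have hface : {x ∈ voronoiCell L | ‖x - q‖ = ‖x‖} =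
      {x ∈ voronoiCell L | innerₗ E q x = ‖q‖ ^ 2 / 2} := by
    ext x
    refine and_congr_right fun _ => ?_
    rw [norm_sub_eq_norm_iff, innerₗ_apply_apply, real_inner_comm]
    constructor <;> intro h <;> linarith
  rw [hface]
  exact isExtreme_setOf_eq_of_forall_le (innerₗ E q) hle

theorem mem_extremePoints_voronoiCell_of_sub_mem {K k : E}
    (hK : K ∈ (voronoiCell L).extremePoints ℝ) (hk : k - K ∈ L) (hnorm : ‖k‖ = ‖K‖) :
    k ∈ (voronoiCell L).extremePoints ℝ := by
  have hKk : K - k ∈ L := by simpa using L.neg_mem hk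
  have hkV : k ∈ voronoiCell L := by
    simpa using sub_mem_voronoiCell hK.1 hKk (by simpa using hnorm)
  refine mem_extremePoints_of_add_mem_extremePoints (isExtreme_voronoiCell_bisector hk)
    (v := -(k - K)) (fun y hy => ?_) ⟨hkV, by simpa using hnorm.symm⟩ (by simpa using hK)
  rw [neg_add_eq_sub]
  exact sub_mem_voronoiCell hy.1 hk hy.2

end VoronoiCell

open scoped RealInnerProductSpace in
theorem statement18_general (n : ℕ)
    (kd : Fin n → EuclideanSpace ℝ (Fin n))
    -- `K` is a vertex (extreme point) of the Brillouin zone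
    (K : EuclideanSpace ℝ (Fin n))
    (hK : K ∈ Set.extremePoints ℝ (brillouinZone kd)) :
    {k : EuclideanSpace ℝ (Fin n) |
        k - K ∈ (Submodule.span ℤ (Set.range kd) :
          Submodule ℤ (EuclideanSpace ℝ (Fin n))) ∧ ‖k‖ = ‖K‖}
      = Set.extremePoints ℝ (brillouinZone kd) ∩
        {k : EuclideanSpace ℝ (Fin n) |
          k - K ∈ (Submodule.span ℤ (Set.range kd) :
            Submodule ℤ (EuclideanSpace ℝ (Fin n)))} := by
  change K ∈ (voronoiCell _).extremePoints ℝ at hK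
  change _ = (voronoiCell _).extremePoints ℝ ∩ _
  ext k
  constructor
  · rintro ⟨hk, hnorm⟩
    exact ⟨mem_extremePoints_voronoiCell_of_sub_mem hK hk hnorm, hk⟩
  · rintro ⟨hkV, hk⟩
    exact ⟨hk, norm_eq_of_mem_voronoiCell_of_sub_mem hkV.1 hK.1 hk⟩

open scoped RealInnerProductSpace in
theorem statement18 (n : ℕ)
    (b : Module.Basis (Fin n) ℝ (EuclideanSpace ℝ (Fin n)))
    (kd : Fin n → EuclideanSpace ℝ (Fin n))
    -- `kd` is the dual basis: `⟪kd i, b j⟫ = 2π δ_{ij}`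
    (hdual : ∀ i j, ⟪kd i, b j⟫ = if i = j then 2 * Real.pi else 0)
    -- `K` is a vertex (extreme point) of the Brillouin zone
    (K : EuclideanSpace ℝ (Fin n))
    (hK : K ∈ Set.extremePoints ℝ (brillouinZone kd)) :
    {k : EuclideanSpace ℝ (Fin n) |
        k - K ∈ (Submodule.span ℤ (Set.range kd) :
          Submodule ℤ (EuclideanSpace ℝ (Fin n))) ∧ ‖k‖ = ‖K‖}
      = Set.extremePoints ℝ (brillouinZone kd) ∩
        {k : EuclideanSpace ℝ (Fin n) |
          k - K ∈ (Submodule.span ℤ (Set.range kd) :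
            Submodule ℤ (EuclideanSpace ℝ (Fin n)))} :=
  statement18_general n kd K hK
end
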